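/- arXiv:2311.17247 — 3 statements merged into one kernel-verified Lean document; each statement's English description precedes it below -/
import Mathlib

section
/- A formal series D(z,w) = Σ_{m,n∈ℤ} D_{m,n} z^{-m-1} w^{-n-1} with coefficients in a vector space satisfies (z-w)^N D(z,w) = 0 if and only if D(z,w) = Σ_{j=0}^{N-1} c_j(w) ∂_w^{(j)} δ(z,w) for some formal series c_j(w) in one variable; moreover in that case c_j(w) = res_z((z-w)^j D(z,w)). -/
/-!
In coefficients, `c(w) ∂_w^{(j)} δ(z,w)` has `z^i w^k`-coefficient `C(-i-1, j) c(k+i+1+j)`, so by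
Pascal's rule multiplication by `z - w` lowers `j` by one and kills `j = 0`; this gives the "if"
direction. Conversely, a series killed by `z - w` is constant along the antidiagonals, hence equals
`res_z(D) δ(z,w)`. For `(z-w)^(N+1) D = 0`, the induction hypothesis applied to `(z-w) D` shows
that `D - Σ_{j<N} res_z((z-w)^(j+1) D) ∂_w^{(j+1)} δ` is killed by `z - w`, and its residue is
`res_z D` since `res_z ∂_w^{(j+1)} δ = 0`.
-/

section
variable (V : Type*) [AddCommGroup V] [Module ℂ V]

/-- A formal series in two variables `z, w` with coefficients in `V`:
`D i j` is the coefficient of `z^i w^j`. -/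
def FormalSeries2 := ℤ → ℤ → V

variable {V}

/-- Multiplication of a two-variable formal series by `(z - w)`. -/
noncomputable def mulZsubW (D : FormalSeries2 V) : FormalSeries2 V :=
  fun i j => D (i - 1) j - D i (j - 1)

/-- Formal partial derivative `∂_w`. -/
noncomputable def dW (D : FormalSeries2 V) : FormalSeries2 V :=
  fun i j => ((j + 1 : ℤ) : ℂ) • D i (j + 1)

/-- The formal delta function `δ(z,w) = Σ_{m∈ℤ} z^{-m-1} w^m`. -/
noncomputable def fdelta : FormalSeries2 ℂ := fun i j => if j = -i - 1 then 1 else 0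

/-- The divided-power derivative `∂_w^{(n)} δ(z,w)`. -/
noncomputable def pdelta (n : ℕ) : FormalSeries2 ℂ :=
  fun i j => ((n.factorial : ℂ))⁻¹ * (dW^[n] fdelta) i j

/-- The residue `res_z` of a two-variable series: the coefficient of `z^{-1}`,
as a one-variable series in `w`. -/
noncomputable def resZ (D : FormalSeries2 V) : ℤ → V := fun j => D (-1) j

/-- The product `c(w) · E(z,w)` of a one-variable series `c` with coefficients
in `V` with a scalar two-variable series `E` (defined whenever, for each fixed
power of `z`, only finitely many `w`-coefficients of `E` are nonzero, as is the
case for `E = ∂_w^{(j)}δ`). -/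
noncomputable def wMul (c : ℤ → V) (E : FormalSeries2 ℂ) : FormalSeries2 V :=
  fun i k => ∑ᶠ b : ℤ, E i b • c (k - b)

section

omit [Module ℂ V]

instance FormalSeries2.instAddCommGroup : AddCommGroup (FormalSeries2 V) := Pi.addCommGroup

lemma sum_formalSeries2_eq {ι : Type*} (s : Finset ι) (f : ι → FormalSeries2 V) :
    ∑ j ∈ s, f j = fun i k => ∑ j ∈ s, f j i k := by
  funext i k
  rw [← Finset.sum_apply (M := fun _ => V) k s fun j => f j i]
  exact congrFun (Finset.sum_apply (M := fun _ => ℤ → V) i s f) k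

noncomputable def mulZsubWAddHom : AddMonoid.End (FormalSeries2 V) where
  toFun := mulZsubW
  map_zero' := funext₂ fun _ _ => sub_zero 0
  map_add' _ _ := funext₂ fun _ _ => add_sub_add_comm _ _ _ _

lemma mulZsubW_sub (D E : FormalSeries2 V) : mulZsubW (D - E) = mulZsubW D - mulZsubW E :=
  map_sub mulZsubWAddHom D E

lemma mulZsubW_sum {ι : Type*} (s : Finset ι) (f : ι → FormalSeries2 V) :
    mulZsubW (∑ j ∈ s, f j) = ∑ j ∈ s, mulZsubW (f j) :=
  map_sum mulZsubWAddHom f s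

lemma iterate_mulZsubW_sum {ι : Type*} (n : ℕ) (s : Finset ι) (f : ι → FormalSeries2 V) :
    mulZsubW^[n] (∑ j ∈ s, f j) = ∑ j ∈ s, mulZsubW^[n] (f j) :=
  map_sum (mulZsubWAddHom ^ n) f s

lemma resZ_sub (D E : FormalSeries2 V) : resZ (D - E) = resZ D - resZ E := rfl

lemma resZ_sum {ι : Type*} (s : Finset ι) (f : ι → FormalSeries2 V) :
    resZ (∑ j ∈ s, f j) = ∑ j ∈ s, resZ (f j) :=
  map_sum (Pi.evalAddMonoidHom (fun _ => ℤ → V) (-1)) f s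

end

lemma iterate_dW_fdelta (n : ℕ) (i j : ℤ) :
    (dW^[n] fdelta) i j = (ascPochhammer ℂ n).eval ((j : ℂ) + 1) * fdelta i (j + n) := by
  induction n generalizing j with
  | zero => simp
  | succ n ih =>
    rw [Function.iterate_succ_apply', dW, ih, smul_eq_mul, ascPochhammer_succ_left,
      Polynomial.eval_mul, Polynomial.eval_comp]
    simp only [Polynomial.eval_X, Polynomial.eval_add, Polynomial.eval_one]
    push_cast
    ring_nf

lemma pdelta_apply (n : ℕ) (i b : ℤ) :
    pdelta n i b = if b = -i - 1 - n then Ring.choose (-(i : ℂ) - 1) n else 0 := by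
  rw [pdelta, iterate_dW_fdelta, fdelta]
  split_ifs with hδ hb hb
  -- at `b = -i-1-n` the rising factorial `(b+1)⋯(b+n)` is the falling factorial `(-i-1)⋯(-i-n)`
  · rw [Ring.choose_eq_smul, Polynomial.descPochhammer_smeval_eq_ascPochhammer,
      Polynomial.ascPochhammer_smeval_eq_eval, hb, smul_eq_mul, mul_one]
    push_cast
    ring_nf
  · omega
  · omega
  · rw [mul_zero, mul_zero]

lemma wMul_pdelta_apply (c : ℤ → V) (j : ℕ) (i k : ℤ) :
    wMul c (pdelta j) i k = Ring.choose (-(i : ℂ) - 1) j • c (k + i + 1 + j) := by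
  rw [wMul, finsum_eq_single _ (-i - 1 - j) fun b hb => by rw [pdelta_apply, if_neg hb, zero_smul],
    pdelta_apply, if_pos rfl]
  ring_nf

lemma mulZsubW_wMul_pdelta_succ (c : ℤ → V) (j : ℕ) :
    mulZsubW (wMul c (pdelta (j + 1))) = wMul c (pdelta j) := by
  funext i k
  rw [mulZsubW, wMul_pdelta_apply, wMul_pdelta_apply, wMul_pdelta_apply,
    show k + (i - 1) + 1 + ((j + 1 : ℕ) : ℤ) = k + i + 1 + j by push_cast; ring,
    show k - 1 + i + 1 + ((j + 1 : ℕ) : ℤ) = k + i + 1 + j by push_cast; ring,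
    show -((i - 1 : ℤ) : ℂ) - 1 = (-(i : ℂ) - 1) + 1 by push_cast; ring,
    ← sub_smul, Ring.choose_succ_succ, add_sub_cancel_right]

lemma mulZsubW_wMul_pdelta_zero (c : ℤ → V) : mulZsubW (wMul c (pdelta 0)) = 0 := by
  funext i k
  rw [mulZsubW, wMul_pdelta_apply, wMul_pdelta_apply, Ring.choose_zero_right,
    Ring.choose_zero_right, show k + (i - 1) + 1 + ((0 : ℕ) : ℤ) = k - 1 + i + 1 + ((0 : ℕ) : ℤ) by
      ring, sub_self]
  rfl

lemma resZ_wMul_pdelta_succ (c : ℤ → V) (j : ℕ) : resZ (wMul c (pdelta (j + 1))) = 0 := by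
  funext k
  rw [resZ, wMul_pdelta_apply, show -(((-1 : ℤ)) : ℂ) - 1 = 0 by push_cast; ring,
    Ring.choose_zero_succ, zero_smul]
  rfl

lemma iterate_mulZsubW_wMul_pdelta_of_lt (c : ℤ → V) {j n : ℕ} (h : j < n) :
    mulZsubW^[n] (wMul c (pdelta j)) = 0 := by
  obtain ⟨m, rfl⟩ : ∃ m, n = m + 1 := ⟨n - 1, by omega⟩
  induction j generalizing m with
  | zero =>
    rw [Function.iterate_succ_apply, mulZsubW_wMul_pdelta_zero]
    exact map_zero (mulZsubWAddHom ^ m)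
  | succ j ih =>
    rw [Function.iterate_succ_apply, mulZsubW_wMul_pdelta_succ]
    obtain ⟨l, rfl⟩ : ∃ l, m = l + 1 := ⟨m - 1, by omega⟩
    exact ih l (by omega)

lemma eq_wMul_resZ_pdelta_zero_of_mulZsubW_eq_zero {E : FormalSeries2 V} (h : mulZsubW E = 0) :
    E = wMul (resZ E) (pdelta 0) := by
  have step (i k : ℤ) : E (i + 1) (k - 1) = E i k := by
    have := sub_eq_zero.mp (congrFun (congrFun h (i + 1)) k)
    rwa [add_sub_cancel_right, eq_comm] at this
  have shift (i k n : ℤ) : E (i + n) (k - n) = E i k := by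
    induction n using Int.induction_on with
    | zero => simp
    | succ n ih =>
      rw [← ih, ← step (i + n)]
      congr 1 <;> ring
    | pred n ih =>
      rw [← ih, ← step]
      congr 1 <;> ring
  funext i k
  rw [wMul_pdelta_apply, Ring.choose_zero_right, one_smul, resZ, ← shift i k (-1 - i)]
  congr 1 <;> push_cast <;> ring

theorem eq_sum_wMul_resZ_pdelta_of_iterate_mulZsubW_eq_zero {N : ℕ} {D : FormalSeries2 V}
    (h : mulZsubW^[N] D = 0) :
    D = ∑ j ∈ Finset.range N, wMul (resZ (mulZsubW^[j] D)) (pdelta j) := by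
  induction N generalizing D with
  | zero => exact h
  | succ N ih =>
    set T := ∑ j ∈ Finset.range N, wMul (resZ (mulZsubW^[j + 1] D)) (pdelta (j + 1))
    have hT : mulZsubW T = mulZsubW D := by
      simp only [T, mulZsubW_sum, mulZsubW_wMul_pdelta_succ]
      exact (ih h).symm
    have hresT : resZ T = 0 := by
      simp only [T, resZ_sum, resZ_wMul_pdelta_succ, Finset.sum_const_zero]
    have hker : D - T = wMul (resZ D) (pdelta 0) := by
      have := eq_wMul_resZ_pdelta_zero_of_mulZsubW_eq_zero (E := D - T)
        (by rw [mulZsubW_sub, hT, sub_self])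
      rwa [resZ_sub, hresT, sub_zero] at this
    rw [Finset.sum_range_succ', Function.iterate_zero_apply, ← hker]
    exact (add_sub_cancel T D).symm

/-- a formal series `D(z,w)` satisfies `(z-w)^N D = 0` if and
only if `D = Σ_{j=0}^{N-1} c_j(w) ∂_w^{(j)} δ(z,w)` for some one-variable
series `c_j(w)`; and in that case `c_j(w) = res_z((z-w)^j D(z,w))`. -/
theorem locality_iff_delta_expansion (N : ℕ) (D : FormalSeries2 V) :
    ((mulZsubW^[N] D = fun _ _ => 0) ↔
      ∃ c : ℕ → ℤ → V,
        D = fun i k => ∑ j ∈ Finset.range N, wMul (c j) (pdelta j) i k) ∧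
    (mulZsubW^[N] D = (fun _ _ => 0) →
      D = fun i k =>
        ∑ j ∈ Finset.range N, wMul (resZ (mulZsubW^[j] D)) (pdelta j) i k) := by
  simp only [← sum_formalSeries2_eq]
  refine ⟨⟨fun h => ⟨_, eq_sum_wMul_resZ_pdelta_of_iterate_mulZsubW_eq_zero h⟩, ?_⟩,
    eq_sum_wMul_resZ_pdelta_of_iterate_mulZsubW_eq_zero⟩
  rintro ⟨c, rfl⟩
  rw [iterate_mulZsubW_sum]
  exact Finset.sum_eq_zero fun j hj =>
    iterate_mulZsubW_wMul_pdelta_of_lt (c j) (Finset.mem_range.mp hj)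

end
end

section
/- On the polynomial ring H = ℂ[x_1, x_2, ...] with Heisenberg operators h_n, the operators L_n = (1/2)Σ_{j∈ℤ} h_{n-j}h_j for n ≠ 0 and L_0 = Σ_{j≥1} h_{-j}h_j (using h_0 = 0) satisfy the Virasoro relations [L_m, L_n] = (m-n)L_{m+n} + δ_{m,-n}·((m³-m)/12)·Id_H, i.e., H is a module of central charge 1 over the Virasoro algebra. -/
open MvPolynomial

/-- The Heisenberg operators on `H = ℂ[x₁, x₂, …]`: `h_m` is multiplication by
`x_{-m}` for `m < 0`, `m·∂/∂x_m` for `m > 0`, and `h_0 = 0`. -/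
noncomputable def heisOp (m : ℤ) : Module.End ℂ (MvPolynomial ℕ ℂ) :=
  if m < 0 then LinearMap.mulLeft ℂ (X (-m).toNat)
  else if 0 < m then (m.toNat : ℂ) • (pderiv m.toNat : Derivation ℂ (MvPolynomial ℕ ℂ) (MvPolynomial ℕ ℂ)).toLinearMap
  else 0

/-- The Virasoro operators on `H`:
`L_n = (1/2) Σ_{j∈ℤ} h_{n-j} h_j` for `n ≠ 0`, and `L_0 = Σ_{j≥1} h_{-j} h_j`
(on each polynomial only finitely many summands act nontrivially). -/
noncomputable def virOp (n : ℤ) : MvPolynomial ℕ ℂ → MvPolynomial ℕ ℂ := fun p =>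
  if n = 0 then ∑ᶠ j : ℤ, if 1 ≤ j then heisOp (-j) (heisOp j p) else 0
  else (2 : ℂ)⁻¹ • ∑ᶠ j : ℤ, heisOp (n - j) (heisOp j p)


/-!
The classical Sugawara argument. Truncating the sums to `|j| ≤ R` gives genuine operators
`virOpTrunc n R` that agree with `L_n` on any fixed polynomial once `R` is large, and whose
commutator with `h_k` is exactly `-k h_{n+k}` as soon as `R ≥ |k|, |n + k|`; hence
`[L_n, h_k] = -k h_{n+k}`. By the Jacobi identity the defect `D = [L_m, L_n] - (m - n) L_{m+n}`
commutes with every `h_k`, and also with `x₀` and `∂/∂x₀`: the variable `X 0` of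
`MvPolynomial ℕ ℂ` is a spectator on which no `h_k` acts. An operator commuting with all
multiplications by variables and all partial derivatives is a scalar, here the constant coefficient
of `D 1`, i.e. the vacuum expectation `⟨D⟩`. Since `L_n 1 = 0` for `n ≥ 0` and `⟨L_n ·⟩ = 0`
for `n ≤ 0`, the only surviving term is `⟨L_m L_{-m}⟩ = ½ Σ_{0<i<m} i (m - i) = (m³ - m) / 12`
for `m > 0`.
-/

open Finset Filter

attribute [local instance] LieRing.ofAssociativeRing

theorem Ring.mul_lie {A : Type*} [Ring A] (a b c : A) :
    ⁅a * b, c⁆ = a * ⁅b, c⁆ + ⁅a, c⁆ * b := by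
  simp only [Ring.lie_def]
  noncomm_ring

namespace MvPolynomial

variable {σ R : Type*}

theorem pderiv_pderiv_comm [CommSemiring R] (i j : σ) (p : MvPolynomial σ R) :
    pderiv i (pderiv j p) = pderiv j (pderiv i p) := by
  classical
  induction p using MvPolynomial.induction_on with
  | C a => simp
  | add p q hp hq => simp [hp, hq]
  | mul_X p k hp =>
    simp only [pderiv_mul, pderiv_X, map_add, hp, Pi.single_apply]
    split_ifs <;> simp; ring

theorem eq_C_constantCoeff_of_pderiv_eq_zero [CommRing R] [IsAddTorsionFree R]
    {q : MvPolynomial σ R} (h : ∀ i, pderiv i q = 0) : q = C (constantCoeff q) := by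
  apply coe_injective σ R
  apply MvPowerSeries.pderiv.ext
  · intro i
    rw [MvPowerSeries.pderiv_coe, MvPowerSeries.pderiv_coe, h, pderiv_C]
  · simp only [← MvPowerSeries.coeff_zero_eq_constantCoeff_apply, coeff_coe, coeff_zero_C,
      constantCoeff_eq]

theorem apply_eq_mul_apply_one_of_commute_mulLeft [CommRing R]
    {T : Module.End R (MvPolynomial σ R)} (hT : ∀ i, Commute T (LinearMap.mulLeft R (X i)))
    (p : MvPolynomial σ R) : T p = p * T 1 := by
  induction p using MvPolynomial.induction_on with
  | C a => rw [← smul_eq_C_mul, ← map_smul, smul_eq_C_mul, mul_one]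
  | add p q hp hq => rw [map_add, hp, hq, add_mul]
  | mul_X p i hp =>
    have := LinearMap.congr_fun (hT i) p
    simp only [Module.End.mul_apply, LinearMap.mulLeft_apply] at this
    rw [mul_comm p, this, hp, mul_assoc]

theorem eq_smul_one_of_commute_mulLeft_pderiv [CommRing R] [IsAddTorsionFree R]
    {T : Module.End R (MvPolynomial σ R)} (hX : ∀ i, Commute T (LinearMap.mulLeft R (X i)))
    (hD : ∀ i, Commute T (pderiv i).toLinearMap) : T = constantCoeff (T 1) • 1 := by
  have hconst : T 1 = C (constantCoeff (T 1)) := by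
    refine eq_C_constantCoeff_of_pderiv_eq_zero fun i => ?_
    have := LinearMap.congr_fun (hD i) 1
    simp only [Module.End.mul_apply, Derivation.coeFn_coe, pderiv_one, map_zero] at this
    exact this.symm
  refine LinearMap.ext fun p => ?_
  rw [apply_eq_mul_apply_one_of_commute_mulLeft hX, hconst, constantCoeff_C, LinearMap.smul_apply,
    Module.End.one_apply, smul_eq_C_mul, mul_comm]

end MvPolynomial

local notation "𝓗" => MvPolynomial ℕ ℂ

-- `sub_lie`, `smul_lie`, `lie_smul` specialised: `rw` does not match the `LinearMap` operations
-- of `Module.End ℂ 𝓗` against the ones those lemmas derive from the Lie ring structure.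
theorem smul_lie' (c : ℂ) (x y : Module.End ℂ 𝓗) : ⁅c • x, y⁆ = c • ⁅x, y⁆ := smul_lie c x y

theorem lie_smul' (c : ℂ) (x y : Module.End ℂ 𝓗) : ⁅x, c • y⁆ = c • ⁅x, y⁆ := lie_smul c x y

theorem sub_lie' (x y z : Module.End ℂ 𝓗) : ⁅x - y, z⁆ = ⁅x, z⁆ - ⁅y, z⁆ := sub_lie x y z

theorem heisOp_natCast (k : ℕ) : heisOp k = (k : ℂ) • (pderiv k).toLinearMap := by
  rcases k.eq_zero_or_pos with rfl | hk
  · simp [heisOp]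
  · simp [heisOp, hk]

theorem heisOp_negSucc (k : ℕ) : heisOp (Int.negSucc k) = LinearMap.mulLeft ℂ (X (k + 1)) := by
  simp [heisOp, Int.negSucc_lt_zero]

theorem heisOp_zero : heisOp 0 = 0 := by
  simpa using heisOp_natCast 0

theorem lie_heisOp_heisOp (a b : ℤ) :
    ⁅heisOp a, heisOp b⁆ = if a = -b then (a : ℂ) • 1 else 0 := by
  refine LinearMap.ext fun p => ?_
  rcases a with k | k <;> rcases b with l | l <;>
    simp only [Int.ofNat_eq_natCast, heisOp_natCast, heisOp_negSucc] <;>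
    simp only [Ring.lie_def, LinearMap.sub_apply, Module.End.mul_apply, LinearMap.smul_apply,
      LinearMap.mulLeft_apply, Derivation.coeFn_coe, map_smul, pderiv_mul, Int.negSucc_eq]
  · rcases eq_or_ne k 0 with rfl | hk
    · simp
    · rw [if_neg (by omega), pderiv_pderiv_comm, smul_comm, sub_self, LinearMap.zero_apply]
  · rcases eq_or_ne k (l + 1) with rfl | hk
    · simp [smul_add]
    · rw [if_neg (by omega), pderiv_X_of_ne (by omega)]
      simp
  · rcases eq_or_ne l (k + 1) with rfl | hl
    · simp only [pderiv_X_self, ↓reduceIte, Nat.cast_add, Nat.cast_one, Int.cast_neg, Int.cast_add,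
        Int.cast_natCast, Int.cast_one, LinearMap.smul_apply, Module.End.one_apply, one_mul]
      module
    · rw [if_neg (by omega), pderiv_X_of_ne (by omega)]
      simp
  · rw [if_neg (by omega), mul_left_comm, sub_self, LinearMap.zero_apply]

theorem commute_heisOp_heisOp {a b : ℤ} (h : a ≠ -b) : Commute (heisOp a) (heisOp b) := by
  rw [commute_iff_lie_eq, lie_heisOp_heisOp, if_neg h]

theorem heisOp_apply_eq_zero_of_notMem_vars {k : ℕ} {p : 𝓗} (h : k ∉ p.vars) :
    heisOp k p = 0 := by
  simp [heisOp_natCast, pderiv_eq_zero_of_notMem_vars h]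

theorem eventually_heisOp_apply_eq_zero (p : 𝓗) : ∀ᶠ i : ℤ in atTop, heisOp i p = 0 := by
  filter_upwards [eventually_gt_atTop ((p.vars.sup id : ℕ) : ℤ)] with i hi
  lift i to ℕ using by omega
  exact heisOp_apply_eq_zero_of_notMem_vars fun hmem => by
    have : i ≤ p.vars.sup id := Finset.le_sup (f := id) hmem
    omega

theorem heisOp_one_of_nonneg {a : ℤ} (ha : 0 ≤ a) : heisOp a 1 = 0 := by
  lift a to ℕ using ha
  simp [heisOp_natCast]

theorem constantCoeff_heisOp_of_neg {a : ℤ} (ha : a < 0) (q : 𝓗) :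
    constantCoeff (heisOp a q) = 0 := by
  obtain ⟨k, rfl⟩ := Int.eq_negSucc_of_lt_zero ha
  simp [heisOp_negSucc]

theorem heisOp_heisOp_one {a b : ℤ} (hab : a + b ≠ 0) (h : 0 ≤ a ∨ 0 ≤ b) :
    heisOp a (heisOp b 1) = 0 := by
  rcases le_or_gt 0 b with hb | hb
  · rw [heisOp_one_of_nonneg hb, map_zero]
  · rw [← Module.End.mul_apply, (commute_heisOp_heisOp (by omega)).eq, Module.End.mul_apply,
      heisOp_one_of_nonneg (by omega), map_zero]

theorem constantCoeff_heisOp_heisOp {a b : ℤ} (hab : a + b < 0) (q : 𝓗) :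
    constantCoeff (heisOp a (heisOp b q)) = 0 := by
  rcases lt_or_ge a 0 with ha | ha
  · exact constantCoeff_heisOp_of_neg ha _
  · rw [← Module.End.mul_apply, (commute_heisOp_heisOp (by omega)).eq, Module.End.mul_apply,
      constantCoeff_heisOp_of_neg (by omega)]

theorem constantCoeff_heisOp_heisOp_one {a b : ℤ} (hab : a + b ≠ 0) :
    constantCoeff (heisOp a (heisOp b 1)) = 0 := by
  rcases lt_or_gt_of_ne hab with hab | hab
  · exact constantCoeff_heisOp_heisOp hab 1
  · rw [heisOp_heisOp_one hab.ne' (by omega), map_zero]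

theorem constantCoeff_heisOp_heisOp_neg_one (i : ℕ) :
    constantCoeff (heisOp i (heisOp (-i) 1)) = i := by
  rcases i.eq_zero_or_pos with rfl | hi
  · simp [heisOp_zero]
  · obtain ⟨k, rfl⟩ := Nat.exists_eq_succ_of_ne_zero hi.ne'
    rw [show -((k.succ : ℕ) : ℤ) = Int.negSucc k by rfl, heisOp_negSucc, heisOp_natCast]
    simp

noncomputable def virOpTrunc (n : ℤ) (R : ℕ) : Module.End ℂ 𝓗 :=
  if n = 0 then ∑ j ∈ Icc (1 : ℤ) R, heisOp (-j) * heisOp j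
  else (2 : ℂ)⁻¹ • ∑ j ∈ Icc (-(R : ℤ)) R, heisOp (n - j) * heisOp j

theorem virOp_eventually_eq_virOpTrunc (n : ℤ) (p : 𝓗) :
    ∀ᶠ R : ℕ in atTop, virOp n p = virOpTrunc n R p := by
  obtain ⟨N, hN⟩ := eventually_atTop.1 (eventually_heisOp_apply_eq_zero p)
  filter_upwards [eventually_ge_atTop (N.toNat + n.natAbs)] with R hR
  unfold virOp virOpTrunc
  split_ifs with hn
  · rw [LinearMap.sum_apply, finsum_eq_sum_of_support_subset _ (s := Icc (1 : ℤ) R) ?_]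
    · refine sum_congr rfl fun j hj => ?_
      rw [if_pos (mem_Icc.1 hj).1, Module.End.mul_apply]
    · intro j hj
      rw [Function.mem_support] at hj
      simp only [coe_Icc, Set.mem_Icc]
      by_contra h
      split_ifs at hj
      · exact hj (by rw [hN j (by omega), map_zero])
      · exact hj rfl
  · rw [LinearMap.smul_apply, LinearMap.sum_apply,
      finsum_eq_sum_of_support_subset _ (s := Icc (-(R : ℤ)) R) ?_]
    · simp only [Module.End.mul_apply]
    · intro j hj
      rw [Function.mem_support] at hj
      simp only [coe_Icc, Set.mem_Icc]
      by_contra h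
      rcases not_and_or.1 h with h | h
      · rw [← Module.End.mul_apply, (commute_heisOp_heisOp (by omega)).eq, Module.End.mul_apply,
          hN (n - j) (by omega), map_zero] at hj
        exact hj rfl
      · exact hj (by rw [hN j (by omega), map_zero])

theorem lie_virOpTrunc_heisOp (n k : ℤ) :
    ∀ᶠ R : ℕ in atTop, ⁅virOpTrunc n R, heisOp k⁆ = -(k : ℂ) • heisOp (n + k) := by
  filter_upwards [eventually_ge_atTop (k.natAbs + (n + k).natAbs)] with R hR
  have hlie (a b : ℤ) : ⁅heisOp a * heisOp b, heisOp k⁆ =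
      (if b = -k then (b : ℂ) • heisOp a else 0) + (if a = -k then (a : ℂ) • heisOp b else 0) := by
    rw [Ring.mul_lie, lie_heisOp_heisOp, lie_heisOp_heisOp]
    split_ifs <;> simp
  unfold virOpTrunc
  split_ifs with hn
  · subst hn
    simp only [sum_lie, hlie, sum_add_distrib, neg_eq_iff_eq_neg, neg_neg, sum_ite_eq', mem_Icc]
    rw [zero_add, Int.cast_neg]
    rcases lt_trichotomy k 0 with hk | rfl | hk
    · rw [if_pos (by omega), if_neg (by omega), add_zero]
    · simp [heisOp_zero]
    · rw [if_neg (by omega), if_pos (by omega), zero_add]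
  · rw [smul_lie', sum_lie]
    simp only [hlie, sum_add_distrib, sum_ite_eq', mem_Icc,
      show ∀ j, (n - j = -k ↔ j = n + k) from fun j => by omega]
    rw [if_pos (by omega), if_pos (by omega), sub_neg_eq_add, sub_add_cancel_left, ← two_smul ℂ,
      smul_smul, inv_mul_cancel₀ two_ne_zero, one_smul, Int.cast_neg]

theorem commute_virOpTrunc {T : Module.End ℂ 𝓗} (hT : ∀ j, Commute T (heisOp j)) (n : ℤ)
    (R : ℕ) : Commute (virOpTrunc n R) T := by
  have hsum (f g : ℤ → ℤ) (s : Finset ℤ) : Commute (∑ j ∈ s, heisOp (f j) * heisOp (g j)) T :=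
    Commute.sum_left _ _ _ fun j _ => ((hT _).mul_right (hT _)).symm
  unfold virOpTrunc
  split_ifs
  · exact hsum _ _ _
  · exact (hsum _ _ _).smul_left _

noncomputable def virOpₗ (n : ℤ) : Module.End ℂ 𝓗 where
  toFun := virOp n
  map_add' p q := by
    obtain ⟨R, hp, hq, hpq⟩ := ((virOp_eventually_eq_virOpTrunc n p).and
      ((virOp_eventually_eq_virOpTrunc n q).and (virOp_eventually_eq_virOpTrunc n (p + q)))).exists
    rw [hp, hq, hpq, map_add]
  map_smul' c p := by
    obtain ⟨R, hp, hcp⟩ := ((virOp_eventually_eq_virOpTrunc n p).and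
      (virOp_eventually_eq_virOpTrunc n (c • p))).exists
    rw [hp, hcp, map_smul, RingHom.id_apply]

@[simp]
theorem virOpₗ_apply (n : ℤ) (p : 𝓗) : virOpₗ n p = virOp n p := rfl

theorem lie_virOpₗ_heisOp (n k : ℤ) : ⁅virOpₗ n, heisOp k⁆ = -(k : ℂ) • heisOp (n + k) := by
  refine LinearMap.ext fun p => ?_
  obtain ⟨R, hlie, hp, hkp⟩ := ((lie_virOpTrunc_heisOp n k).and
    ((virOp_eventually_eq_virOpTrunc n p).and
      (virOp_eventually_eq_virOpTrunc n (heisOp k p)))).exists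
  rw [← hlie]
  simp only [Ring.lie_def, LinearMap.sub_apply, Module.End.mul_apply, virOpₗ_apply, hp, hkp]

theorem commute_virOpₗ {T : Module.End ℂ 𝓗} (hT : ∀ j, Commute T (heisOp j)) (n : ℤ) :
    Commute (virOpₗ n) T := by
  refine LinearMap.ext fun p => ?_
  obtain ⟨R, hp, hTp⟩ := ((virOp_eventually_eq_virOpTrunc n p).and
    (virOp_eventually_eq_virOpTrunc n (T p))).exists
  have := LinearMap.congr_fun (commute_virOpTrunc hT n R) p
  simp only [Module.End.mul_apply] at this ⊢
  rw [virOpₗ_apply, virOpₗ_apply, hp, hTp, this]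

theorem commute_mulLeft_X_zero_heisOp (j : ℤ) :
    Commute (LinearMap.mulLeft ℂ (X 0 : 𝓗)) (heisOp j) := by
  refine LinearMap.ext fun p => ?_
  rcases j with k | k
  · rcases k.eq_zero_or_pos with rfl | hk
    · simp [heisOp_zero]
    · simp [heisOp_natCast, pderiv_X_of_ne hk.ne]
  · simp [heisOp_negSucc, mul_left_comm]

theorem commute_pderiv_zero_heisOp (j : ℤ) :
    Commute (pderiv 0 : Derivation ℂ 𝓗 𝓗).toLinearMap (heisOp j) := by
  refine LinearMap.ext fun p => ?_
  rcases j with k | k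
  · simp [heisOp_natCast, pderiv_pderiv_comm]
  · simp [heisOp_negSucc, pderiv_X_of_ne (Nat.succ_ne_zero k)]

theorem eq_smul_one_of_commute_heisOp {T : Module.End ℂ 𝓗} (hT : ∀ j, Commute T (heisOp j))
    (hX : Commute T (LinearMap.mulLeft ℂ (X 0))) (hD : Commute T (pderiv 0).toLinearMap) :
    T = constantCoeff (T 1) • 1 := by
  refine eq_smul_one_of_commute_mulLeft_pderiv (fun i => ?_) (fun i => ?_)
  · rcases i with _ | k
    · exact hX
    · simpa [heisOp_negSucc] using hT (Int.negSucc k)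
  · rcases i with _ | k
    · exact hD
    · have := (hT (k + 1 : ℕ)).smul_right ((k + 1 : ℂ)⁻¹)
      rwa [heisOp_natCast, smul_smul, Nat.cast_succ, inv_mul_cancel₀ (Nat.cast_add_one_ne_zero k),
        one_smul] at this

noncomputable def virasoroDefect (m n : ℤ) : Module.End ℂ 𝓗 :=
  ⁅virOpₗ m, virOpₗ n⁆ - ((m - n : ℤ) : ℂ) • virOpₗ (m + n)

theorem commute_virasoroDefect_heisOp (m n k : ℤ) : Commute (virasoroDefect m n) (heisOp k) := by
  rw [commute_iff_lie_eq, virasoroDefect, sub_lie', lie_lie, smul_lie', lie_virOpₗ_heisOp,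
    lie_virOpₗ_heisOp, lie_virOpₗ_heisOp, lie_smul', lie_smul', lie_virOpₗ_heisOp,
    lie_virOpₗ_heisOp, show n + (m + k) = m + (n + k) by ring, show m + n + k = m + (n + k) by ring]
  push_cast
  module

theorem commute_virasoroDefect {T : Module.End ℂ 𝓗} (hT : ∀ j, Commute T (heisOp j)) (m n : ℤ) :
    Commute (virasoroDefect m n) T := by
  have h := fun n => commute_virOpₗ hT n
  rw [virasoroDefect, Ring.lie_def]
  exact (((h m).mul_left (h n)).sub_left ((h n).mul_left (h m))).sub_left ((h _).smul_left _)

theorem virasoroDefect_eq_smul_one (m n : ℤ) :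
    virasoroDefect m n = constantCoeff (virasoroDefect m n 1) • 1 :=
  eq_smul_one_of_commute_heisOp (commute_virasoroDefect_heisOp m n)
    (commute_virasoroDefect (fun j => commute_mulLeft_X_zero_heisOp j) m n)
    (commute_virasoroDefect (fun j => commute_pderiv_zero_heisOp j) m n)

theorem virOp_one_of_nonneg {n : ℤ} (hn : 0 ≤ n) : virOp n 1 = 0 := by
  unfold virOp
  split_ifs with h0
  · refine (finsum_congr fun j => ?_).trans finsum_zero
    split_ifs with hj
    · rw [heisOp_one_of_nonneg (by omega), map_zero]
    · rfl
  · rw [finsum_congr fun j => heisOp_heisOp_one (by omega) (by omega), finsum_zero, smul_zero]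

theorem constantCoeff_virOp_of_nonpos {n : ℤ} (hn : n ≤ 0) (q : 𝓗) :
    constantCoeff (virOp n q) = 0 := by
  obtain ⟨R, hR⟩ := (virOp_eventually_eq_virOpTrunc n q).exists
  rw [hR, virOpTrunc]
  split_ifs with h0
  · simp only [LinearMap.sum_apply, Module.End.mul_apply, map_sum]
    exact sum_eq_zero fun j hj => constantCoeff_heisOp_of_neg (by simp at hj; omega) _
  · simp only [LinearMap.smul_apply, LinearMap.sum_apply, Module.End.mul_apply, smul_eq_C_mul,
      map_mul, map_sum]
    rw [sum_eq_zero fun j _ => constantCoeff_heisOp_heisOp (by omega) _, mul_zero]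

theorem constantCoeff_virOp_one (n : ℤ) : constantCoeff (virOp n 1) = 0 := by
  rcases le_total 0 n with hn | hn
  · rw [virOp_one_of_nonneg hn, map_zero]
  · exact constantCoeff_virOp_of_nonpos hn 1

theorem virOp_neg_natCast_one (k : ℕ) :
    virOp (-k) 1 = (2 : ℂ)⁻¹ • ∑ i ∈ range k, heisOp (i - k) (heisOp (-i) 1) := by
  rcases k.eq_zero_or_pos with rfl | hk
  · simp [virOp_one_of_nonneg]
  obtain ⟨R, hR, hkR⟩ := ((virOp_eventually_eq_virOpTrunc (-k) 1).and
    (eventually_ge_atTop k)).exists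
  rw [hR, virOpTrunc, if_neg (by omega), LinearMap.smul_apply, LinearMap.sum_apply]
  congr 1
  have himage : (range k).image (fun i : ℕ => -(i : ℤ)) ⊆ Icc (-(R : ℤ)) R := by
    intro j hj
    simp only [mem_image, mem_range] at hj
    obtain ⟨i, hi, rfl⟩ := hj
    simp only [mem_Icc]
    omega
  rw [← sum_subset himage, sum_image (fun i _ j _ h => by simpa using h)]
  · refine sum_congr rfl fun i _ => ?_
    rw [Module.End.mul_apply, sub_neg_eq_add, neg_add_eq_sub]
  · intro j _ hj
    simp only [mem_image, mem_range, not_exists, not_and] at hj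
    rw [Module.End.mul_apply]
    exact heisOp_heisOp_one (by omega) (by
      by_contra h
      exact hj (-j).toNat (by omega) (by omega))

theorem virOp_heisOp_apply (n k : ℤ) (p : 𝓗) :
    virOp n (heisOp k p) = heisOp k (virOp n p) - (k : ℂ) • heisOp (n + k) p := by
  have := LinearMap.congr_fun (lie_virOpₗ_heisOp n k) p
  simp only [Ring.lie_def, LinearMap.sub_apply, Module.End.mul_apply, virOpₗ_apply,
    LinearMap.smul_apply, neg_smul] at this
  rw [eq_add_of_sub_eq this]
  abel

theorem constantCoeff_virOp_heisOp_of_neg (m : ℤ) {a : ℤ} (ha : a < 0) (q : 𝓗) :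
    constantCoeff (virOp m (heisOp a q)) = -a * constantCoeff (heisOp (m + a) q) := by
  rw [virOp_heisOp_apply, map_sub, constantCoeff_heisOp_of_neg ha, smul_eq_C_mul, map_mul,
    constantCoeff_C]
  ring

theorem sum_range_sub_mul (k : ℕ) : ∑ i ∈ range k, ((k : ℂ) - i) * i = (k ^ 3 - k) / 6 := by
  have gauss : ∀ k : ℕ, ∑ i ∈ range k, (i : ℂ) = k * (k - 1) / 2 := by
    intro k
    induction k with
    | zero => simp
    | succ k ih => rw [sum_range_succ, ih]; push_cast; ring
  induction k with
  | zero => simp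
  | succ k ih =>
    have hsplit (i : ℕ) : (((k + 1 : ℕ) : ℂ) - i) * i = (k - i) * i + i := by push_cast; ring
    rw [sum_range_succ, sum_congr rfl fun i _ => hsplit i, sum_add_distrib, ih, gauss]
    push_cast
    ring

theorem constantCoeff_virOp_virOp_one (m n : ℤ) :
    constantCoeff (virOp m (virOp n 1)) =
      if m = -n ∧ 0 < m then ((m ^ 3 - m : ℤ) : ℂ) / 12 else 0 := by
  rcases le_or_gt 0 n with hn | hn
  · rw [virOp_one_of_nonneg hn, ← virOpₗ_apply, map_zero, map_zero, if_neg (by omega)]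
  rcases le_or_gt m 0 with hm | hm
  · rw [constantCoeff_virOp_of_nonpos hm, if_neg (by omega)]
  obtain ⟨k, rfl⟩ : ∃ k : ℕ, n = -k := ⟨n.natAbs, by omega⟩
  rw [virOp_neg_natCast_one, ← virOpₗ_apply, map_smul, map_sum, smul_eq_C_mul, map_mul, map_sum,
    constantCoeff_C]
  simp only [virOpₗ_apply]
  rw [sum_congr rfl fun i hi => constantCoeff_virOp_heisOp_of_neg m (by simp at hi; omega) _]
  by_cases hmk : m = k
  · subst hmk
    rw [if_pos ⟨by ring, hm⟩]
    simp only [add_sub_cancel, constantCoeff_heisOp_heisOp_neg_one, Int.cast_sub, Int.cast_natCast,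
      neg_sub]
    rw [sum_range_sub_mul]
    push_cast
    ring
  · rw [if_neg (by omega), sum_eq_zero fun i _ => by
      rw [constantCoeff_heisOp_heisOp_one (by omega), mul_zero], mul_zero]

theorem constantCoeff_virasoroDefect_one (m n : ℤ) :
    constantCoeff (virasoroDefect m n 1) = if m = -n then ((m ^ 3 - m : ℤ) : ℂ) / 12 else 0 := by
  simp only [virasoroDefect, Ring.lie_def, LinearMap.sub_apply, Module.End.mul_apply,
    LinearMap.smul_apply, virOpₗ_apply, map_sub, smul_eq_C_mul, map_mul, constantCoeff_C,
    constantCoeff_virOp_virOp_one, constantCoeff_virOp_one, mul_zero, sub_zero]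
  by_cases h : m = -n
  · obtain rfl : n = -m := by omega
    rcases lt_trichotomy m 0 with hm | rfl | hm
    · rw [if_neg (by omega), if_pos ⟨by ring, by omega⟩, if_pos h]
      push_cast
      ring
    · simp
    · rw [if_pos ⟨by ring, hm⟩, if_neg (by omega), if_pos h, sub_zero]
  · rw [if_neg (by omega), if_neg (by omega), if_neg h, sub_zero]

/-- the operators `L_n` satisfy the Virasoro relations
`[L_m, L_n] = (m-n)L_{m+n} + δ_{m,-n}·((m³-m)/12)·Id`, i.e. `H` is a
Virasoro module of central charge `1`. -/
theorem fock_space_virasoro (m n : ℤ) (p : MvPolynomial ℕ ℂ) :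
    virOp m (virOp n p) - virOp n (virOp m p) =
      ((m - n : ℤ) : ℂ) • virOp (m + n) p +
        (if m = -n then (((m ^ 3 - m : ℤ) : ℂ) / 12) else 0) • p := by
  have h := LinearMap.congr_fun (virasoroDefect_eq_smul_one m n) p
  rw [constantCoeff_virasoroDefect_one] at h
  simp only [virasoroDefect, Ring.lie_def, LinearMap.sub_apply, Module.End.mul_apply,
    LinearMap.smul_apply, virOpₗ_apply, Module.End.one_apply] at h
  rw [← h]
  abel
end

section
/- The quotient algebra U(sl₂)/(e²) is isomorphic, as an associative ℂ-algebra, to ℂ ⊕ Mat₂(ℂ), the direct sum of ℂ and the algebra of 2×2 complex matrices. -/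
attribute [local instance 100] LieRing.ofAssociativeRing

/-!
The action of `sl₂` on `ℂ ⊕ ℂ²` (trivial plus standard representation) extends to an algebra map
`φ : U(sl₂) → ℂ × Mat₂(ℂ)`. It kills `e²`, because `e` acts by a square-zero matrix, and it is
surjective, because the images of `e` and `f` generate `ℂ × Mat₂(ℂ)`.

Conversely, in `U(sl₂)/(e²)` the relations of `sl₂` together with `e² = 0` force `eh = -e`,
`he = e`, `2ef = h² + h`, `fh = f`, `hf = -f`, `f² = 0` and `h³ = h`, so the quotient is spanned by
`1, h, h², e, f`. Having dimension at most `5 = dim (ℂ × Mat₂(ℂ))`, it is mapped isomorphically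
onto `ℂ × Mat₂(ℂ)` by the surjection induced by `φ`.
-/

open Module Submodule

section LieHom

variable {R L M : Type*} [CommRing R] [LieRing L] [LieAlgebra R L] [LieRing M] [LieAlgebra R M]

theorem LinearMap.map_lie_of_span_eq_top {s : Set L} (hs : span R s = ⊤) (T : L →ₗ[R] M)
    (hT : ∀ x ∈ s, ∀ y ∈ s, T ⁅x, y⁆ = ⁅T x, T y⁆) (x y : L) : T ⁅x, y⁆ = ⁅T x, T y⁆ := by
  have key : (LieModule.toEnd R L L : L →ₗ[R] Module.End R L).compr₂ T =
      (LieModule.toEnd R M M : M →ₗ[R] Module.End R M).compl₁₂ T T :=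
    LinearMap.ext_on hs fun x hx ↦ LinearMap.ext_on hs fun y hy ↦ hT x hx y hy
  exact LinearMap.congr_fun₂ key x y

theorem exists_lieHom_of_sl2 {e h f : L} (hspan : span R {e, h, f} = ⊤)
    (hli : LinearIndependent R ![e, h, f])
    (he : ⁅h, e⁆ = (2 : R) • e) (hf : ⁅h, f⁆ = (-2 : R) • f) (hef : ⁅e, f⁆ = h)
    {E H F : M} (hE : ⁅H, E⁆ = (2 : R) • E) (hF : ⁅H, F⁆ = (-2 : R) • F) (hEF : ⁅E, F⁆ = H) :
    ∃ ρ : L →ₗ⁅R⁆ M, ρ e = E ∧ ρ h = H ∧ ρ f = F := by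
  have hrange : Set.range ![e, h, f] = {e, h, f} := by
    simp only [Matrix.range_cons, Matrix.range_empty, Set.union_empty, Set.singleton_union]
  let b := Basis.mk hli (by rw [hrange, hspan])
  let T := b.constr R ![E, H, F]
  have hT : ∀ i, T (![e, h, f] i) = ![E, H, F] i := fun i ↦ by
    rw [← b.constr_basis R ![E, H, F] i, Basis.mk_apply]
  obtain ⟨hTe, hTh, hTf⟩ : T e = E ∧ T h = H ∧ T f = F := ⟨hT 0, hT 1, hT 2⟩
  have hlie : ∀ x ∈ ({e, h, f} : Set L), ∀ y ∈ ({e, h, f} : Set L), T ⁅x, y⁆ = ⁅T x, T y⁆ := by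
    simp only [Set.mem_insert_iff, Set.mem_singleton_iff, forall_eq_or_imp, forall_eq]
    refine ⟨⟨?_, ?_, ?_⟩, ⟨?_, ?_, ?_⟩, ⟨?_, ?_, ?_⟩⟩ <;>
      simp only [← lie_skew e h, ← lie_skew f h, ← lie_skew f e, ← lie_skew E H, ← lie_skew F H,
        ← lie_skew F E, lie_self, he, hf, hef, hE, hF, hEF, hTe, hTh, hTf, map_neg, map_smul,
        map_zero]
  exact ⟨{ T with map_lie' := T.map_lie_of_span_eq_top hspan hlie _ _ }, hTe, hTh, hTf⟩

end LieHom

namespace UniversalEnvelopingAlgebra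

variable {R L : Type*} [CommRing R] [LieRing L] [LieAlgebra R L]

theorem adjoin_range_ι :
    Algebra.adjoin R (Set.range (ι R : L → UniversalEnvelopingAlgebra R L)) = ⊤ := by
  have hsurj : Function.Surjective (mkAlgHom R L) := RingCon.mkₐ_surjective _
  rw [show Set.range (ι R : L → _) = mkAlgHom R L '' Set.range (TensorAlgebra.ι R) by
      rw [← Set.range_comp]; rfl,
    Algebra.adjoin_image, TensorAlgebra.adjoin_range_ι, Algebra.map_top,
    (AlgHom.range_eq_top _).2 hsurj]

theorem adjoin_ι_image {s : Set L} (hs : span R s = ⊤) : Algebra.adjoin R (ι R '' s) = ⊤ := by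
  have : (span R (ι R '' s) : Set (UniversalEnvelopingAlgebra R L)) = Set.range (ι R) := by
    rw [← LieHom.coe_toLinearMap, span_image, hs, Submodule.map_top, LinearMap.coe_range]
  rw [← Algebra.adjoin_span, this, adjoin_range_ι]

end UniversalEnvelopingAlgebra

theorem Submodule.eq_top_of_one_mem_of_mul_mem {R A : Type*} [CommSemiring R] [Semiring A]
    [Algebra R A] {s : Set A} (hs : Algebra.adjoin R s = ⊤) {S : Submodule R A} (h1 : 1 ∈ S)
    (hmul : ∀ x ∈ s, ∀ y ∈ S, x * y ∈ S) : S = ⊤ := by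
  have key : ∀ a ∈ Algebra.adjoin R s, ∀ y ∈ S, a * y ∈ S := fun a ha ↦ by
    induction ha using Algebra.adjoin_induction with
    | mem x hx => exact hmul x hx
    | algebraMap r => exact fun y hy ↦ by rw [← Algebra.smul_def]; exact S.smul_mem r hy
    | add x z _ _ hx hz => exact fun y hy ↦ by rw [add_mul]; exact add_mem (hx y hy) (hz y hy)
    | mul x z _ _ hx hz => exact fun y hy ↦ by rw [mul_assoc]; exact hx _ (hz y hy)
  exact eq_top_iff.2 fun a _ ↦ by simpa using key a (hs ▸ trivial) 1 h1

theorem TwoSidedIdeal.ker_eq_of_finrank_quotient_le {K A B : Type*} [Field K] [Ring A]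
    [Algebra K A] [Ring B] [Algebra K B] [FiniteDimensional K B] {φ : A →ₐ[K] B}
    (hφ : Function.Surjective φ) {I : TwoSidedIdeal A} (hI : I ≤ ker φ)
    [FiniteDimensional K I.ringCon.Quotient] (hrank : finrank K I.ringCon.Quotient ≤ finrank K B) :
    ker φ = I := by
  let φ' := I.ringCon.liftₐ φ (ringCon_le_iff.1 hI)
  have hφ' : Function.Surjective φ' := fun b ↦
    let ⟨a, ha⟩ := hφ b
    ⟨I.ringCon.mkₐ K a, ha⟩
  have hinj := (OrzechProperty.bijective_of_surjective_of_finrank_le φ'.toLinearMap hφ' hrank).1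
  refine le_antisymm (fun u hu ↦ ?_) hI
  rw [← ker_ringCon_mk' I, mem_ker]
  exact hinj (((mem_ker φ).1 hu).trans (map_zero φ').symm)

structure IsSl2TripleSqZero (K : Type*) {Q : Type*} [CommRing K] [Ring Q] [Algebra K Q]
    (E H F : Q) : Prop where
  lie_h_e : ⁅H, E⁆ = (2 : K) • E
  lie_h_f : ⁅H, F⁆ = (-2 : K) • F
  lie_e_f : ⁅E, F⁆ = H
  e_mul_e : E * E = 0

namespace IsSl2TripleSqZero

section CommRing

variable {K Q : Type*} [CommRing K] [Ring Q] [Algebra K Q] {E H F : Q}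

theorem of_lieHom {L : Type*} [LieRing L] [LieAlgebra K L] {e h f : L}
    (he : ⁅h, e⁆ = (2 : K) • e) (hf : ⁅h, f⁆ = (-2 : K) • f) (hef : ⁅e, f⁆ = h) (ψ : L →ₗ⁅K⁆ Q)
    (hψ : ψ e * ψ e = 0) : IsSl2TripleSqZero K (ψ e) (ψ h) (ψ f) where
  lie_h_e := by rw [← ψ.map_lie, he, map_smul]
  lie_h_f := by rw [← ψ.map_lie, hf, map_smul]
  lie_e_f := by rw [← ψ.map_lie, hef]
  e_mul_e := hψ

theorem h_mul_e_sub (t : IsSl2TripleSqZero K E H F) : H * E - E * H = 2 * E := by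
  rw [← Ring.lie_def, t.lie_h_e, Algebra.smul_def, map_ofNat]

theorem h_mul_f_sub (t : IsSl2TripleSqZero K E H F) : H * F - F * H = -(2 * F) := by
  rw [← Ring.lie_def, t.lie_h_f, Algebra.smul_def, map_neg, map_ofNat, neg_mul]

theorem e_mul_f_sub (t : IsSl2TripleSqZero K E H F) : E * F - F * E = H := by
  rw [← Ring.lie_def, t.lie_e_f]

end CommRing

variable {K Q : Type*} [Field K] [CharZero K] [Ring Q] [Algebra K Q] {E H F : Q}

theorem e_mul_h (t : IsSl2TripleSqZero K E H F) : E * H = -E := by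
  -- `[e², f] = 2 (eh + e)`
  have h2 : (2 : K) • (E * H + E) = 0 := by
    rw [Algebra.smul_def, map_ofNat]
    linear_combination (norm := noncomm_ring) t.e_mul_e * F - F * t.e_mul_e - E * t.e_mul_f_sub
      - t.e_mul_f_sub * E - t.h_mul_e_sub
  exact add_eq_zero_iff_eq_neg.1 ((smul_eq_zero.1 h2).resolve_left two_ne_zero)

theorem h_mul_e (t : IsSl2TripleSqZero K E H F) : H * E = E := by
  linear_combination (norm := noncomm_ring) t.h_mul_e_sub + t.e_mul_h

theorem two_mul_e_mul_f (t : IsSl2TripleSqZero K E H F) : 2 * (E * F) = H * H + H := by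
  -- `[f, eh + e] = 2ef - h² - h`
  linear_combination (norm := noncomm_ring) E * t.h_mul_f_sub + t.e_mul_f_sub * H + t.e_mul_f_sub
    + F * t.e_mul_h - t.e_mul_h * F

theorem f_mul_h (t : IsSl2TripleSqZero K E H F) : F * H = F := by
  -- `[2ef - h² - h, f] = 6 (fh - f)`
  have h6 : (6 : K) • (F * H - F) = 0 := by
    rw [Algebra.smul_def, map_ofNat]
    linear_combination (norm := noncomm_ring) t.two_mul_e_mul_f * F - F * t.two_mul_e_mul_f
      - 3 * t.h_mul_f_sub + t.h_mul_f_sub * H + H * t.h_mul_f_sub - 2 * (t.e_mul_f_sub * F)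
  exact sub_eq_zero.1 ((smul_eq_zero.1 h6).resolve_left (by norm_num))

theorem h_mul_f (t : IsSl2TripleSqZero K E H F) : H * F = -F := by
  linear_combination (norm := noncomm_ring) t.h_mul_f_sub + t.f_mul_h

theorem f_mul_f (t : IsSl2TripleSqZero K E H F) : F * F = 0 := by
  have h2 : (2 : K) • (F * F) = 0 := by
    rw [Algebra.smul_def, map_ofNat]
    linear_combination (norm := noncomm_ring) F * t.h_mul_f_sub + F * t.f_mul_h - t.f_mul_h * F
  exact (smul_eq_zero.1 h2).resolve_left two_ne_zero

theorem two_mul_f_mul_e (t : IsSl2TripleSqZero K E H F) : 2 * (F * E) = H * H - H := by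
  linear_combination (norm := noncomm_ring) t.two_mul_e_mul_f - 2 * t.e_mul_f_sub

theorem h_mul_h_mul_h (t : IsSl2TripleSqZero K E H F) : H * H * H = H := by
  linear_combination (norm := noncomm_ring) t.two_mul_e_mul_f + 2 * (t.h_mul_e * F)
    - H * t.two_mul_e_mul_f

theorem e_mul_f (t : IsSl2TripleSqZero K E H F) : E * F = (2⁻¹ : K) • (H * H + H) := by
  rw [← t.two_mul_e_mul_f, ← map_ofNat (algebraMap K Q) 2, ← Algebra.smul_def, smul_smul,
    inv_mul_cancel₀ two_ne_zero, one_smul]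

theorem f_mul_e (t : IsSl2TripleSqZero K E H F) : F * E = (2⁻¹ : K) • (H * H - H) := by
  rw [← t.two_mul_f_mul_e, ← map_ofNat (algebraMap K Q) 2, ← Algebra.smul_def, smul_smul,
    inv_mul_cancel₀ two_ne_zero, one_smul]

theorem span_eq_top (t : IsSl2TripleSqZero K E H F) (hgen : Algebra.adjoin K {E, H, F} = ⊤) :
    span K {1, H, H * H, E, F} = ⊤ := by
  refine Submodule.eq_top_of_one_mem_of_mul_mem hgen (subset_span (by simp)) fun x hx ↦ ?_
  suffices span K {1, H, H * H, E, F} ≤ (span K {1, H, H * H, E, F}).comap (LinearMap.mulLeft K x)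
    from fun y hy ↦ this hy
  rw [span_le]
  simp only [Set.mem_insert_iff, Set.mem_singleton_iff] at hx
  simp only [Set.insert_subset_iff, Set.singleton_subset_iff, Set.mem_preimage, SetLike.mem_coe,
    comap_coe, LinearMap.mulLeft_apply]
  rcases hx with rfl | rfl | rfl <;> refine ⟨?_, ?_, ?_, ?_, ?_⟩ <;>
    (try simp only [mul_one, ← mul_assoc, t.e_mul_h, t.h_mul_e, t.h_mul_f, t.f_mul_h, t.e_mul_f,
      t.f_mul_e, t.h_mul_h_mul_h, t.e_mul_e, t.f_mul_f, neg_mul, neg_neg]) <;>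
    aesop (add safe apply [subset_span, Submodule.smul_mem, Submodule.add_mem, Submodule.sub_mem,
      Submodule.neg_mem, Submodule.zero_mem])

theorem finiteDimensional (t : IsSl2TripleSqZero K E H F)
    (hgen : Algebra.adjoin K {E, H, F} = ⊤) : FiniteDimensional K Q :=
  Module.finite_def.2 (Submodule.fg_def.2 ⟨_, Set.toFinite _, t.span_eq_top hgen⟩)

theorem finrank_le_five (t : IsSl2TripleSqZero K E H F) (hgen : Algebra.adjoin K {E, H, F} = ⊤) :
    finrank K Q ≤ 5 := by
  have hrange : Set.range ![1, H, H * H, E, F] = {1, H, H * H, E, F} := by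
    simp only [Matrix.range_cons, Matrix.range_empty, Set.union_empty, Set.singleton_union]
  exact finrank_le_of_span_eq_top (hrange ▸ t.span_eq_top hgen)

end IsSl2TripleSqZero

section TrivialPlusStandard

variable (K : Type*) [CommRing K]

-- The actions of `e`, `h`, `f` on `K ⊕ K²`, the trivial plus the standard representation.
def trivStdE : K × Matrix (Fin 2) (Fin 2) K := (0, !![0, 1; 0, 0])

def trivStdH : K × Matrix (Fin 2) (Fin 2) K := (0, !![1, 0; 0, -1])

def trivStdF : K × Matrix (Fin 2) (Fin 2) K := (0, !![0, 0; 1, 0])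

variable {K}

theorem lie_trivStdH_trivStdE : ⁅trivStdH K, trivStdE K⁆ = (2 : K) • trivStdE K := by
  simp [trivStdH, trivStdE, Ring.lie_def, Prod.ext_iff]
  norm_num

theorem lie_trivStdH_trivStdF : ⁅trivStdH K, trivStdF K⁆ = (-2 : K) • trivStdF K := by
  simp [trivStdH, trivStdF, Ring.lie_def, Prod.ext_iff, ← Matrix.zero_empty, Matrix.cons_zero_zero]
  norm_num

theorem lie_trivStdE_trivStdF : ⁅trivStdE K, trivStdF K⁆ = trivStdH K := by
  simp [trivStdH, trivStdF, trivStdE, Ring.lie_def]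

theorem trivStdE_mul_self : trivStdE K * trivStdE K = 0 := by
  simp [trivStdE, Prod.ext_iff, ← Matrix.ext_iff, Fin.forall_fin_two]

theorem adjoin_trivStdE_trivStdF : Algebra.adjoin K {trivStdE K, trivStdF K} = ⊤ := by
  refine eq_top_iff.2 fun ⟨a, M⟩ _ ↦ ?_
  set E := trivStdE K
  set F := trivStdF K
  have hE : E ∈ Algebra.adjoin K {E, F} := Algebra.subset_adjoin (by simp)
  have hF : F ∈ Algebra.adjoin K {E, F} := Algebra.subset_adjoin (by simp)
  have hM : (a, M) =
      a • 1 + (M 0 0 - a) • (E * F) + M 0 1 • E + M 1 0 • F + (M 1 1 - a) • (F * E) := by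
    simp [E, F, trivStdE, trivStdF, Prod.ext_iff, ← Matrix.ext_iff, Fin.forall_fin_two]
  rw [hM]
  exact add_mem (add_mem (add_mem (add_mem (Subalgebra.smul_mem _ (one_mem _) _)
    (Subalgebra.smul_mem _ (mul_mem hE hF) _)) (Subalgebra.smul_mem _ hE _))
    (Subalgebra.smul_mem _ hF _)) (Subalgebra.smul_mem _ (mul_mem hF hE) _)

end TrivialPlusStandard

theorem UniversalEnvelopingAlgebra.ker_eq_span_sq {K L B : Type*} [Field K] [CharZero K]
    [LieRing L] [LieAlgebra K L] {e h f : L} (he : ⁅h, e⁆ = (2 : K) • e)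
    (hf : ⁅h, f⁆ = (-2 : K) • f) (hef : ⁅e, f⁆ = h) (hspan : span K {e, h, f} = ⊤) [Ring B]
    [Algebra K B] [FiniteDimensional K B] (hB : 5 ≤ finrank K B)
    {φ : UniversalEnvelopingAlgebra K L →ₐ[K] B} (hφ : Function.Surjective φ)
    (hφe : φ (ι K e) * φ (ι K e) = 0) :
    TwoSidedIdeal.ker φ = TwoSidedIdeal.span {ι K e * ι K e} := by
  set I := TwoSidedIdeal.span {ι K e * ι K e}
  have hφI : I ≤ TwoSidedIdeal.ker φ :=
    TwoSidedIdeal.span_le.2 (by simpa [TwoSidedIdeal.mem_ker] using hφe)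
  let π := I.ringCon.mkₐ K
  have ht : IsSl2TripleSqZero K (π (ι K e)) (π (ι K h)) (π (ι K f)) := by
    refine .of_lieHom he hf hef (π.toLieHom.comp (ι K)) ?_
    show π (ι K e) * π (ι K e) = 0
    rw [← map_mul]
    exact (TwoSidedIdeal.mem_ker I.ringCon.mk').1
      (by rw [TwoSidedIdeal.ker_ringCon_mk']; exact TwoSidedIdeal.subset_span rfl)
  have hgen : Algebra.adjoin K {π (ι K e), π (ι K h), π (ι K f)} = ⊤ := by
    rw [show {π (ι K e), π (ι K h), π (ι K f)} = π '' (ι K '' {e, h, f}) by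
        simp [Set.image_insert_eq],
      Algebra.adjoin_image, adjoin_ι_image hspan, Algebra.map_top, RingCon.range_mkₐ]
  have := ht.finiteDimensional hgen
  exact TwoSidedIdeal.ker_eq_of_finrank_quotient_le hφ hφI ((ht.finrank_le_five hgen).trans hB)

/-- `U(sl₂)/(e²)` is isomorphic as an associative ℂ-algebra to
`ℂ ⊕ Mat₂(ℂ)`; we phrase this via a surjective ℂ-algebra homomorphism
`U(sl₂) → ℂ × Mat₂(ℂ)` whose kernel is exactly the two-sided ideal `(e²)`. -/
theorem usl2_mod_esq_iso_C_plus_mat2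
    (L : Type*) [LieRing L] [LieAlgebra ℂ L]
    (e h f : L)
    (he : ⁅h, e⁆ = (2 : ℂ) • e) (hf : ⁅h, f⁆ = (-2 : ℂ) • f) (hef : ⁅e, f⁆ = h)
    (hspan : Submodule.span ℂ {e, h, f} = ⊤)
    (hbasis : LinearIndependent ℂ ![e, h, f])
    (ι : L →ₗ⁅ℂ⁆ UniversalEnvelopingAlgebra ℂ L)
    (hι : ι = UniversalEnvelopingAlgebra.ι ℂ)
    (I : TwoSidedIdeal (UniversalEnvelopingAlgebra ℂ L))
    (hI : I = TwoSidedIdeal.span {ι e * ι e}) :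
    ∃ φ : UniversalEnvelopingAlgebra ℂ L →ₐ[ℂ] ℂ × Matrix (Fin 2) (Fin 2) ℂ,
      Function.Surjective φ ∧ ∀ u, φ u = 0 ↔ u ∈ I := by
  subst hι hI
  obtain ⟨ρ, hρe, -, hρf⟩ := exists_lieHom_of_sl2 hspan hbasis he hf hef
    lie_trivStdH_trivStdE lie_trivStdH_trivStdF lie_trivStdE_trivStdF
  let φ := UniversalEnvelopingAlgebra.lift ℂ ρ
  have hφι : ∀ x, φ (UniversalEnvelopingAlgebra.ι ℂ x) = ρ x :=
    UniversalEnvelopingAlgebra.lift_ι_apply ℂ ρ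
  have hφ : Function.Surjective φ := by
    rw [← AlgHom.range_eq_top, eq_top_iff, ← adjoin_trivStdE_trivStdF, Algebra.adjoin_le_iff,
      Set.pair_subset_iff, ← hρe, ← hρf, ← hφι, ← hφι]
    exact ⟨⟨_, rfl⟩, ⟨_, rfl⟩⟩
  have hker := UniversalEnvelopingAlgebra.ker_eq_span_sq he hf hef hspan
    (by simp [Module.finrank_prod, Module.finrank_matrix]) hφ
    (by rw [hφι, hρe, trivStdE_mul_self])
  exact ⟨φ, hφ, fun u ↦ by rw [← TwoSidedIdeal.mem_ker, hker]⟩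
end
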